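/- For the fixed connected component of the network: the constants a_L, b_L and c_L can be identified from ṡ_L and s̈_L (i.e., the map k ↦ (a_L, b_L, c_L) is identifiable from the variable s_L with D = 2); moreover, if L > 1, the constants a_j and K_j = b_j + c_j for 1 ≤ j ≤ L−1 can be identified from ṡ_L, s̈_L and s_L^{(3)} (i.e., the map k ↦ (a_j, b_j+c_j)_{1≤j≤L−1} is identifiable from s_L with D = 3). -/

import Mathlib

/-!
The species of one connected component span a coordinate subspace that is invariant under the
mass-action flow: a reaction of another component starts at one of its own intermediates or at a
complex `Y' + S'` not made of species of this component (Assumption 1 excludes a complex of this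
component, Assumption 2 excludes `Y'` and `S'` both being substrates or products of it). Setting
the variables outside the component to zero therefore commutes with the Lie derivative, so
`s_L^{(n)}` may be computed in the isolated chain, whose species are pairwise distinct:
`ṡ_L = c_L u_L`, `s̈_L = c_L (a_L y s_{L-1} - K_L u_L)` and
`s_L^{(3)} = c_L (a_L (ẏ s_{L-1} + y ṡ_{L-1}) - K_L u̇_L)`. Evaluating these at points with
coordinates in `{0, 1}` yields `c_L`, `c_L K_L`, `c_L a_L` and, for `j < L`, `c_L a_L K_j` and
`c_L a_L (a_j + 2 a_L + K_L)`; positivity of the rate constants lets one divide.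
-/

open MvPolynomial Finsupp

variable {σ : Type*}

/-- The total (Lie) derivative of a polynomial `φ` associated to the polynomial vector
field `f`: `φ̇ = Σ_x (∂φ/∂x)·f x`. -/
noncomputable def lieD [Fintype σ] (f : σ → MvPolynomial σ ℝ)
    (φ : MvPolynomial σ ℝ) : MvPolynomial σ ℝ :=
  ∑ x : σ, MvPolynomial.pderiv x φ * f x

/-- Iterated total (Lie) derivative. -/
noncomputable def lieDIter [Fintype σ] (f : σ → MvPolynomial σ ℝ) :
    ℕ → MvPolynomial σ ℝ → MvPolynomial σ ℝ
  | 0, φ => φ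
  | n + 1, φ => lieD f (lieDIter f n φ)

/-- Indicator of a species inside a complex, as a real number. -/
def ind [DecidableEq σ] (a x : σ) : ℝ := if a = x then 1 else 0

/-- A chemical reaction network of the structural form of Assumption 1: the connected
components are indexed by `ι`; component `i` is
`Y i + S i 0 ⇄ U i 1 → Y i + S i 1 ⇄ U i 2 → ⋯ ⇄ U i (L i) → Y i + S i (L i)`,
with rate constants `a_{i,j}, b_{i,j}, c_{i,j}` for the reactions
`Y i + S i (j-1) → U i j`, `U i j → Y i + S i (j-1)`, `U i j → Y i + S i j`
(`1 ≤ j ≤ L i`). Only the values `S i j` for `j ≤ L i` and `U i j` for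
`1 ≤ j ≤ L i` are relevant. -/
structure A1Network (σ : Type*) where
  ι : Type
  [fintypeι : Fintype ι]
  L : ι → ℕ
  Lpos : ∀ i, 1 ≤ L i
  Y : ι → σ
  S : ι → ℕ → σ
  U : ι → ℕ → σ

attribute [instance] A1Network.fintypeι

namespace A1Network

variable [Fintype σ] [DecidableEq σ]

/-- Rate-constant index: component `i`, block `j+1` (for `j : Fin (L i)`), and
`0, 1, 2` for the constants `a, b, c` of the block. -/
def Param (N : A1Network σ) : Type := (i : N.ι) × Fin (N.L i) × Fin 3

instance (N : A1Network σ) : Fintype N.Param :=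
  inferInstanceAs (Fintype ((i : N.ι) × Fin (N.L i) × Fin 3))

/-- `x` is an intermediate species of the network. -/
def inter (N : A1Network σ) (x : σ) : Prop :=
  ∃ i, ∃ j : Fin (N.L i), x = N.U i ((j : ℕ) + 1)

/-- The non-intermediate `x₁` reacts with the non-intermediate `x₂`
(a reaction `x₁ + x₂ → U` exists). -/
def reactsWith (N : A1Network σ) (x₁ x₂ : σ) : Prop :=
  ∃ i, ∃ j : Fin (N.L i),
    (x₁ = N.Y i ∧ x₂ = N.S i (j : ℕ)) ∨ (x₂ = N.Y i ∧ x₁ = N.S i (j : ℕ))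

/-- The intermediate `u` reacts to the non-intermediate `x`
(a reaction `u → x + X₂` exists). -/
def reactsTo (N : A1Network σ) (u x : σ) : Prop :=
  ∃ i, ∃ j : Fin (N.L i), u = N.U i ((j : ℕ) + 1) ∧
    (x = N.Y i ∨ x = N.S i (j : ℕ) ∨ x = N.S i ((j : ℕ) + 1))

/-- The distinctness/uniqueness requirements of Assumption 1: the intermediates of the
entire network are pairwise distinct and distinct from all non-intermediates; the
non-intermediates of one component are pairwise distinct; each complex lies in a
unique connected component. -/
structure Assumption1 (N : A1Network σ) : Prop where
  U_inj : ∀ i (j : Fin (N.L i)) i' (j' : Fin (N.L i')),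
    N.U i ((j : ℕ) + 1) = N.U i' ((j' : ℕ) + 1) → i = i' ∧ (j : ℕ) = (j' : ℕ)
  U_ne_Y : ∀ i (j : Fin (N.L i)) i', N.U i ((j : ℕ) + 1) ≠ N.Y i'
  U_ne_S : ∀ i (j : Fin (N.L i)) i' j', j' ≤ N.L i' → N.U i ((j : ℕ) + 1) ≠ N.S i' j'
  S_inj : ∀ i j j', j ≤ N.L i → j' ≤ N.L i → N.S i j = N.S i j' → j = j'
  complex_unique : ∀ i i' j j', j ≤ N.L i → j' ≤ N.L i' →
    (∀ x : σ, ind (N.Y i) x + ind (N.S i j) x = ind (N.Y i') x + ind (N.S i' j') x) →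
    i = i'

/-- `part` is a partition of the species as in Assumption 2: intermediates form class `0`;
all the substrates and products of a component lie in one class `α ≥ 1` which contains
neither the enzyme of the component nor any intermediate. -/
def IsPartition (N : A1Network σ) (part : σ → ℕ) : Prop :=
  (∀ x, N.inter x → part x = 0) ∧
  (∀ i : N.ι, ∃ α, 1 ≤ α ∧ (∀ j, j ≤ N.L i → part (N.S i j) = α) ∧
    part (N.Y i) ≠ α ∧ part (N.Y i) ≠ 0)

/-- Assumption 2: there exists a partition as above. -/
def Assumption2 (N : A1Network σ) : Prop := ∃ part, N.IsPartition part

/-- The mass-action right-hand side of the induced dynamical system: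
`ẋ = Σ_{y→y'} k_{yy'} x^y (y'-y)`. -/
noncomputable def rhs (N : A1Network σ) (k : N.Param → ℝ) (x : σ) : MvPolynomial σ ℝ :=
  ∑ i : N.ι, ∑ j : Fin (N.L i),
    (C (k ⟨i, j, 0⟩ *
          (ind (N.U i ((j : ℕ) + 1)) x - ind (N.Y i) x - ind (N.S i (j : ℕ)) x)) *
        (X (N.Y i) * X (N.S i (j : ℕ)))
      + C (k ⟨i, j, 1⟩ *
          (ind (N.Y i) x + ind (N.S i (j : ℕ)) x - ind (N.U i ((j : ℕ) + 1)) x)) *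
        X (N.U i ((j : ℕ) + 1))
      + C (k ⟨i, j, 2⟩ *
          (ind (N.Y i) x + ind (N.S i ((j : ℕ) + 1)) x - ind (N.U i ((j : ℕ) + 1)) x)) *
        X (N.U i ((j : ℕ) + 1)))

/-- `x^{(ℓ)}(x, k)`: the `ℓ`-th iterated total derivative of the variable `x`. -/
noncomputable def deriv (N : A1Network σ) (k : N.Param → ℝ) (ℓ : ℕ) (x : σ) :
    MvPolynomial σ ℝ :=
  lieDIter (N.rhs k) ℓ (X x)

/-- The map `ψ` on rate constants is identifiable from the set of variables `T` with `D`
derivatives: whenever two positive rate vectors give the same derivatives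
`x^{(ℓ)}`, `1 ≤ ℓ ≤ D`, `x ∈ T`, as polynomials, the values of `ψ` agree. -/
def IdentifiableFrom {α : Type*} (N : A1Network σ) (ψ : (N.Param → ℝ) → α)
    (T : Set σ) (D : ℕ) : Prop :=
  ∀ k₁ k₂ : N.Param → ℝ, (∀ r, 0 < k₁ r) → (∀ r, 0 < k₂ r) →
    (∀ x ∈ T, ∀ ℓ, 1 ≤ ℓ → ℓ ≤ D → N.deriv k₁ ℓ x = N.deriv k₂ ℓ x) →
    ψ k₁ = ψ k₂

end A1Network

noncomputable def killOutside (V : Set σ) : MvPolynomial σ ℝ →ₐ[ℝ] MvPolynomial σ ℝ :=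
  aeval (V.indicator X)

theorem killOutside_X_of_mem {V : Set σ} {x : σ} (hx : x ∈ V) : killOutside V (X x) = X x := by
  simp [killOutside, hx]

theorem killOutside_X_of_notMem {V : Set σ} {x : σ} (hx : x ∉ V) : killOutside V (X x) = 0 := by
  simp [killOutside, hx]

section LieDerivative

variable [Fintype σ] (f : σ → MvPolynomial σ ℝ)

theorem lieD_add (p q : MvPolynomial σ ℝ) : lieD f (p + q) = lieD f p + lieD f q := by
  simp [lieD, add_mul, Finset.sum_add_distrib]

theorem lieD_sub (p q : MvPolynomial σ ℝ) : lieD f (p - q) = lieD f p - lieD f q := by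
  simp [lieD, sub_mul, Finset.sum_sub_distrib]

theorem lieD_mul (p q : MvPolynomial σ ℝ) : lieD f (p * q) = lieD f p * q + p * lieD f q := by
  simp only [lieD, Derivation.leibniz, smul_eq_mul, add_mul, Finset.sum_add_distrib,
    Finset.sum_mul, Finset.mul_sum]
  rw [add_comm]
  congr 1 <;> exact Finset.sum_congr rfl fun x _ => by ring

theorem lieD_C (r : ℝ) : lieD f (C r) = 0 := by
  simp [lieD]

theorem lieD_C_mul (r : ℝ) (p : MvPolynomial σ ℝ) : lieD f (C r * p) = C r * lieD f p := by
  rw [lieD_mul, lieD_C, zero_mul, zero_add]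

theorem lieD_X (x : σ) : lieD f (X x) = f x := by
  classical
  simp [lieD, pderiv_X, Pi.single_apply]

variable {f}

theorem map_lieD (ψ : MvPolynomial σ ℝ →ₐ[ℝ] MvPolynomial σ ℝ) {g : σ → MvPolynomial σ ℝ}
    (h : ∀ x, lieD g (ψ (X x)) = ψ (f x)) (p : MvPolynomial σ ℝ) :
    ψ (lieD f p) = lieD g (ψ p) := by
  induction p using MvPolynomial.induction_on with
  | C r => simp [lieD_C]
  | add p q hp hq => rw [lieD_add, map_add, map_add, hp, hq, lieD_add]
  | mul_X p x hp => rw [lieD_mul, lieD_X, map_add, map_mul, map_mul, hp, map_mul, lieD_mul, h]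

theorem map_lieDIter (ψ : MvPolynomial σ ℝ →ₐ[ℝ] MvPolynomial σ ℝ) {g : σ → MvPolynomial σ ℝ}
    (h : ∀ x, lieD g (ψ (X x)) = ψ (f x)) (n : ℕ) (p : MvPolynomial σ ℝ) :
    ψ (lieDIter f n p) = lieDIter g n (ψ p) := by
  induction n with
  | zero => rfl
  | succ n ih => rw [lieDIter, lieDIter, map_lieD ψ h, ih]

end LieDerivative

namespace A1Network

section

variable {N : A1Network σ}

def species (N : A1Network σ) (i : N.ι) : Set σ :=
  {x | x = N.Y i ∨ (∃ m ≤ N.L i, x = N.S i m) ∨ ∃ j : Fin (N.L i), x = N.U i (j + 1)}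

theorem Y_mem_species (i : N.ι) : N.Y i ∈ N.species i := Or.inl rfl

theorem S_mem_species {i : N.ι} {m : ℕ} (hm : m ≤ N.L i) : N.S i m ∈ N.species i :=
  Or.inr (Or.inl ⟨m, hm, rfl⟩)

theorem U_mem_species (i : N.ι) (j : Fin (N.L i)) : N.U i (j + 1) ∈ N.species i :=
  Or.inr (Or.inr ⟨j, rfl⟩)

theorem Y_ne_S {part : σ → ℕ} (hp : N.IsPartition part) (i : N.ι) {m : ℕ} (hm : m ≤ N.L i) :
    N.Y i ≠ N.S i m := by
  obtain ⟨α, -, hS, hY, -⟩ := hp.2 i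
  exact fun h => hY (h ▸ hS m hm)

end

section

variable [DecidableEq σ] {N : A1Network σ}

noncomputable def componentRhs (N : A1Network σ) (k : N.Param → ℝ) (i : N.ι) (x : σ) :
    MvPolynomial σ ℝ :=
  ∑ j : Fin (N.L i),
    (C (k ⟨i, j, 0⟩ *
          (ind (N.U i ((j : ℕ) + 1)) x - ind (N.Y i) x - ind (N.S i (j : ℕ)) x)) *
        (X (N.Y i) * X (N.S i (j : ℕ)))
      + C (k ⟨i, j, 1⟩ *
          (ind (N.Y i) x + ind (N.S i (j : ℕ)) x - ind (N.U i ((j : ℕ) + 1)) x)) *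
        X (N.U i ((j : ℕ) + 1))
      + C (k ⟨i, j, 2⟩ *
          (ind (N.Y i) x + ind (N.S i ((j : ℕ) + 1)) x - ind (N.U i ((j : ℕ) + 1)) x)) *
        X (N.U i ((j : ℕ) + 1)))

theorem rhs_eq_sum_componentRhs (k : N.Param → ℝ) (x : σ) :
    N.rhs k x = ∑ i, N.componentRhs k i x := rfl

theorem U_notMem_species (h1 : N.Assumption1) {i i' : N.ι} (hi : i' ≠ i) (j : Fin (N.L i')) :
    N.U i' (j + 1) ∉ N.species i := by
  rintro (h | ⟨m, hm, h⟩ | ⟨j', h⟩)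
  · exact h1.U_ne_Y i' j i h
  · exact h1.U_ne_S i' j i m hm h
  · exact hi (h1.U_inj i' j i j' h).1

theorem complex_not_subset_species (h1 : N.Assumption1) {part : σ → ℕ}
    (hp : N.IsPartition part) {i i' : N.ι} (hi : i' ≠ i) (j : Fin (N.L i')) :
    N.Y i' ∉ N.species i ∨ N.S i' j ∉ N.species i := by
  obtain ⟨α', -, hS', hY', -⟩ := hp.2 i'
  obtain ⟨α, -, hS, -, -⟩ := hp.2 i
  have hj : (j : ℕ) ≤ N.L i' := j.isLt.le
  by_contra! ⟨hYmem, hSmem⟩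
  rcases hYmem with hY | ⟨m, hm, hY⟩ | ⟨_, hY⟩
  · rcases hSmem with hS₀ | ⟨m', hm', hS₀⟩ | ⟨_, hS₀⟩
    · exact Y_ne_S hp i' hj (hY.trans hS₀.symm)
    · exact hi (h1.complex_unique i' i j m' hj hm' fun x => by rw [hY, hS₀])
    · exact h1.U_ne_S _ _ i' j hj hS₀.symm
  · rcases hSmem with hS₀ | ⟨m', hm', hS₀⟩ | ⟨_, hS₀⟩
    · exact hi (h1.complex_unique i' i j m hj hm fun x => by rw [hY, hS₀, add_comm])
    · exact hY' (by rw [hY, hS m hm, ← hS m' hm', ← hS₀, hS' j hj])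
    · exact h1.U_ne_S _ _ i' j hj hS₀.symm
  · exact h1.U_ne_Y _ _ i' hY.symm

theorem killOutside_componentRhs_self (k : N.Param → ℝ) (i : N.ι) (x : σ) :
    killOutside (N.species i) (N.componentRhs k i x) = N.componentRhs k i x := by
  simp [componentRhs, killOutside_X_of_mem, Y_mem_species, S_mem_species,
    U_mem_species, Fin.is_le']

theorem killOutside_componentRhs_of_ne (h1 : N.Assumption1) {part : σ → ℕ}
    (hp : N.IsPartition part) (k : N.Param → ℝ) {i i' : N.ι} (hi : i' ≠ i) (x : σ) :
    killOutside (N.species i) (N.componentRhs k i' x) = 0 := by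
  refine (map_sum _ _ _).trans (Finset.sum_eq_zero fun j _ => ?_)
  have hcomplex : killOutside (N.species i) (X (N.Y i') * X (N.S i' j)) = 0 := by
    rcases complex_not_subset_species h1 hp hi j with h | h <;> simp [killOutside_X_of_notMem h]
  simp [hcomplex, killOutside_X_of_notMem (U_notMem_species h1 hi j)]

theorem componentRhs_of_notMem (k : N.Param → ℝ) {i : N.ι} {x : σ} (hx : x ∉ N.species i) :
    N.componentRhs k i x = 0 := by
  have hind : ∀ y ∈ N.species i, ind y x = 0 := fun y hy => if_neg fun (h : y = x) => hx (h ▸ hy)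
  simp [componentRhs, hind, Y_mem_species, S_mem_species, U_mem_species, Fin.is_le']

theorem killOutside_rhs (h1 : N.Assumption1) {part : σ → ℕ} (hp : N.IsPartition part)
    (k : N.Param → ℝ) (i : N.ι) (x : σ) :
    killOutside (N.species i) (N.rhs k x) = N.componentRhs k i x := by
  rw [rhs_eq_sum_componentRhs, map_sum, Finset.sum_eq_single i
    (fun i' _ hi => killOutside_componentRhs_of_ne h1 hp k hi x) (by simp),
    killOutside_componentRhs_self]

theorem U_eq_U_iff (h1 : N.Assumption1) {i : N.ι} {j j' : Fin (N.L i)} :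
    N.U i (j + 1) = N.U i (j' + 1) ↔ j = j' :=
  ⟨fun h => Fin.ext (h1.U_inj i j i j' h).2, fun h => h ▸ rfl⟩

theorem S_eq_S_iff (h1 : N.Assumption1) {i : N.ι} {m m' : ℕ} (hm : m ≤ N.L i)
    (hm' : m' ≤ N.L i) : N.S i m = N.S i m' ↔ m = m' :=
  ⟨h1.S_inj i m m' hm hm', fun h => h ▸ rfl⟩

theorem componentRhs_S_last (h1 : N.Assumption1) {i : N.ι}
    (hYS : ∀ m ≤ N.L i, N.Y i ≠ N.S i m) (k : N.Param → ℝ) {j : Fin (N.L i)}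
    (hj : (j : ℕ) + 1 = N.L i) :
    N.componentRhs k i (N.S i (N.L i)) = C (k ⟨i, j, 2⟩) * X (N.U i (j + 1)) := by
  have hU : ∀ j' : Fin (N.L i), N.U i (j' + 1) ≠ N.S i (N.L i) :=
    fun j' => h1.U_ne_S i j' i _ le_rfl
  have hS : ∀ j' : Fin (N.L i), N.S i j' ≠ N.S i (N.L i) :=
    fun j' => (S_eq_S_iff h1 j'.isLt.le le_rfl).not.2 j'.isLt.ne
  have hS' : ∀ j' : Fin (N.L i), N.S i (j' + 1) = N.S i (N.L i) ↔ j' = j := fun j' =>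
    ⟨fun h => Fin.ext (by have := h1.S_inj i _ _ j'.isLt le_rfl h; omega),
      fun h => by rw [h, hj]⟩
  rw [componentRhs, Finset.sum_eq_single j (fun j' _ hj' => by simp [ind, hU, hS, hS', hj',
    hYS _ le_rfl]) (by simp)]
  simp [ind, hU, hS, hS', hYS _ le_rfl]

theorem componentRhs_U (h1 : N.Assumption1) {i : N.ι} (k : N.Param → ℝ) (j : Fin (N.L i)) :
    N.componentRhs k i (N.U i (j + 1)) = C (k ⟨i, j, 0⟩) * (X (N.Y i) * X (N.S i j))
      - C (k ⟨i, j, 1⟩ + k ⟨i, j, 2⟩) * X (N.U i (j + 1)) := by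
  have hY : N.Y i ≠ N.U i (j + 1) := (h1.U_ne_Y i j i).symm
  have hS : ∀ m ≤ N.L i, N.S i m ≠ N.U i (j + 1) := fun m hm => (h1.U_ne_S i j i m hm).symm
  have hS₀ : ∀ j' : Fin (N.L i), N.S i j' ≠ N.U i (j + 1) := fun j' => hS _ j'.isLt.le
  have hS₁ : ∀ j' : Fin (N.L i), N.S i (j' + 1) ≠ N.U i (j + 1) := fun j' => hS _ j'.isLt
  rw [componentRhs, Finset.sum_eq_single j (fun j' _ hj' => by
    simp [ind, hY, hS₀, hS₁, U_eq_U_iff h1, hj']) (by simp)]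
  simp only [ind, hY, hS₀, hS₁, if_true, if_false, C_mul, C_add, C_sub, C_1, C_0]
  ring

theorem componentRhs_Y (h1 : N.Assumption1) {i : N.ι} (hYS : ∀ m ≤ N.L i, N.Y i ≠ N.S i m)
    (k : N.Param → ℝ) :
    N.componentRhs k i (N.Y i) = ∑ j : Fin (N.L i),
      (C (k ⟨i, j, 1⟩ + k ⟨i, j, 2⟩) * X (N.U i (j + 1))
        - C (k ⟨i, j, 0⟩) * (X (N.Y i) * X (N.S i j))) := by
  refine Finset.sum_congr rfl fun j _ => ?_
  simp only [ind, h1.U_ne_Y, Ne.symm (hYS _ j.isLt.le), Ne.symm (hYS _ j.isLt), if_true,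
    if_false, C_mul, C_add, map_sub, C_0, C_1]
  ring

theorem eval_componentRhs_of_U_eq_zero {i : N.ι} (k : N.Param → ℝ) (P : σ → ℝ)
    (hP : ∀ j : Fin (N.L i), P (N.U i (j + 1)) = 0) (x : σ) :
    eval P (N.componentRhs k i x) = ∑ j : Fin (N.L i), k ⟨i, j, 0⟩ *
      (ind (N.U i (j + 1)) x - ind (N.Y i) x - ind (N.S i j) x) * (P (N.Y i) * P (N.S i j)) := by
  simp [componentRhs, hP, mul_assoc]

end

section

variable [Fintype σ] [DecidableEq σ] {N : A1Network σ}

/-- `s_L^{(n)}` for the component `i` taken alone. -/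
noncomputable def lastProductDeriv (N : A1Network σ) (k : N.Param → ℝ) (i : N.ι) (n : ℕ) :
    MvPolynomial σ ℝ :=
  lieDIter (N.componentRhs k i) n (X (N.S i (N.L i)))

theorem killOutside_deriv (h1 : N.Assumption1) {part : σ → ℕ} (hp : N.IsPartition part)
    (k : N.Param → ℝ) {i : N.ι} (n : ℕ) {x : σ} (hx : x ∈ N.species i) :
    killOutside (N.species i) (N.deriv k n x) = lieDIter (N.componentRhs k i) n (X x) := by
  refine (map_lieDIter _ (fun y => ?_) n _).trans (by rw [killOutside_X_of_mem hx])
  rw [killOutside_rhs h1 hp]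
  by_cases hy : y ∈ N.species i
  · rw [killOutside_X_of_mem hy, lieD_X]
  · rw [killOutside_X_of_notMem hy, componentRhs_of_notMem k hy, ← C_0, lieD_C, C_0]

theorem lastProductDeriv_eq_of_deriv_eq (h1 : N.Assumption1) {part : σ → ℕ}
    (hp : N.IsPartition part) {k₁ k₂ : N.Param → ℝ} {i : N.ι} {n : ℕ}
    (h : N.deriv k₁ n (N.S i (N.L i)) = N.deriv k₂ n (N.S i (N.L i))) :
    N.lastProductDeriv k₁ i n = N.lastProductDeriv k₂ i n := by
  rw [lastProductDeriv, lastProductDeriv, ← killOutside_deriv h1 hp k₁ n (S_mem_species le_rfl),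
    h, killOutside_deriv h1 hp k₂ n (S_mem_species le_rfl)]

variable (h1 : N.Assumption1) {i : N.ι} (hYS : ∀ m ≤ N.L i, N.Y i ≠ N.S i m)
  {j : Fin (N.L i)} (hj : (j : ℕ) + 1 = N.L i)
include h1 hYS hj

theorem lastProductDeriv_one (k : N.Param → ℝ) :
    N.lastProductDeriv k i 1 = C (k ⟨i, j, 2⟩) * X (N.U i (j + 1)) := by
  rw [lastProductDeriv, lieDIter, lieDIter, lieD_X, componentRhs_S_last h1 hYS k hj]

theorem lastProductDeriv_two (k : N.Param → ℝ) :
    N.lastProductDeriv k i 2 =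
      C (k ⟨i, j, 2⟩) * (C (k ⟨i, j, 0⟩) * (X (N.Y i) * X (N.S i j))
        - C (k ⟨i, j, 1⟩ + k ⟨i, j, 2⟩) * X (N.U i (j + 1))) := by
  rw [lastProductDeriv, lieDIter, ← lastProductDeriv, lastProductDeriv_one h1 hYS hj,
    lieD_C_mul, lieD_X, componentRhs_U h1]

theorem lastProductDeriv_three (k : N.Param → ℝ) :
    N.lastProductDeriv k i 3 =
      C (k ⟨i, j, 2⟩) * (C (k ⟨i, j, 0⟩) * (N.componentRhs k i (N.Y i) * X (N.S i j)
          + X (N.Y i) * N.componentRhs k i (N.S i j))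
        - C (k ⟨i, j, 1⟩ + k ⟨i, j, 2⟩) * (C (k ⟨i, j, 0⟩) * (X (N.Y i) * X (N.S i j))
          - C (k ⟨i, j, 1⟩ + k ⟨i, j, 2⟩) * X (N.U i (j + 1)))) := by
  rw [lastProductDeriv, lieDIter, ← lastProductDeriv, lastProductDeriv_two h1 hYS hj,
    lieD_C_mul, lieD_sub, lieD_C_mul, lieD_C_mul, lieD_mul, lieD_X, lieD_X, lieD_X,
    componentRhs_U h1]

theorem eval_lastProductDeriv_one (k : N.Param → ℝ) :
    eval (({N.U i (j + 1)} : Set σ).indicator 1) (N.lastProductDeriv k i 1) = k ⟨i, j, 2⟩ := by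
  simp [lastProductDeriv_one h1 hYS hj]

theorem eval_lastProductDeriv_two_U (k : N.Param → ℝ) :
    eval (({N.U i (j + 1)} : Set σ).indicator 1) (N.lastProductDeriv k i 2) =
      -(k ⟨i, j, 2⟩ * (k ⟨i, j, 1⟩ + k ⟨i, j, 2⟩)) := by
  simp [lastProductDeriv_two h1 hYS hj, (h1.U_ne_Y i j i).symm]
  ring

theorem eval_lastProductDeriv_two_YS (k : N.Param → ℝ) :
    eval (({N.Y i, N.S i j} : Set σ).indicator 1) (N.lastProductDeriv k i 2) =
      k ⟨i, j, 2⟩ * k ⟨i, j, 0⟩ := by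
  simp [lastProductDeriv_two h1 hYS hj, h1.U_ne_Y i j i, h1.U_ne_S i j i j j.isLt.le]

theorem eval_lastProductDeriv_three_US (k : N.Param → ℝ) {q : Fin (N.L i)} (hq : q ≠ j) :
    eval (({N.U i (q + 1), N.S i j} : Set σ).indicator 1) (N.lastProductDeriv k i 3) =
      k ⟨i, j, 2⟩ * k ⟨i, j, 0⟩ * (k ⟨i, q, 1⟩ + k ⟨i, q, 2⟩) := by
  set P : σ → ℝ := ({N.U i (q + 1), N.S i j} : Set σ).indicator 1
  have hUS : ∀ j' : Fin (N.L i), N.U i (j' + 1) ≠ N.S i j :=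
    fun j' => h1.U_ne_S i j' i j j.isLt.le
  have hY : N.Y i ≠ N.U i (q + 1) := (h1.U_ne_Y i q i).symm
  have hgY : eval P (N.componentRhs k i (N.Y i)) = k ⟨i, q, 1⟩ + k ⟨i, q, 2⟩ := by
    rw [componentRhs_Y h1 hYS, map_sum, Finset.sum_eq_single q (fun j' _ hj' => by
      simp [P, Set.indicator_apply, hUS, U_eq_U_iff h1, hj', hY, hYS _ j.isLt.le]) (by simp)]
    simp [P, Set.indicator_apply, hY, hYS _ j.isLt.le]
  simp [lastProductDeriv_three h1 hYS hj, hgY, P, hUS, hY, hYS _ j.isLt.le, U_eq_U_iff h1,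
    hq.symm]
  ring

theorem eval_lastProductDeriv_three_YSS (k : N.Param → ℝ) {q : Fin (N.L i)} (hq : q ≠ j) :
    eval (({N.Y i, N.S i q, N.S i j} : Set σ).indicator 1) (N.lastProductDeriv k i 3) =
      -(k ⟨i, j, 2⟩ * k ⟨i, j, 0⟩ *
        (k ⟨i, q, 0⟩ + 2 * k ⟨i, j, 0⟩ + (k ⟨i, j, 1⟩ + k ⟨i, j, 2⟩))) := by
  set P : σ → ℝ := ({N.Y i, N.S i q, N.S i j} : Set σ).indicator 1
  have hPU : ∀ j' : Fin (N.L i), P (N.U i (j' + 1)) = 0 := fun j' => by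
    simp [P, h1.U_ne_Y, h1.U_ne_S i j' i _ q.isLt.le, h1.U_ne_S i j' i _ j.isLt.le]
  have hPS : ∀ j' : Fin (N.L i), P (N.S i j') = if j' = q ∨ j' = j then 1 else 0 := fun j' => by
    simp [P, Set.indicator_apply, (hYS _ j'.isLt.le).symm,
      S_eq_S_iff h1 j'.isLt.le q.isLt.le, S_eq_S_iff h1 j'.isLt.le j.isLt.le, Fin.val_inj]
  have hPY : P (N.Y i) = 1 := by simp [P]
  have hgY : eval P (N.componentRhs k i (N.Y i)) = -(k ⟨i, q, 0⟩ + k ⟨i, j, 0⟩) := by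
    rw [eval_componentRhs_of_U_eq_zero k P hPU, Fintype.sum_eq_add q j hq fun j' hj' => by
      simp [hPS, hj']]
    simp [ind, hPS, hPY, h1.U_ne_Y, (hYS _ q.isLt.le).symm, (hYS _ j.isLt.le).symm, hq]
    ring
  have hgS : eval P (N.componentRhs k i (N.S i j)) = -k ⟨i, j, 0⟩ := by
    rw [eval_componentRhs_of_U_eq_zero k P hPU, Finset.sum_eq_single j (fun j' _ hj' => by
      simp [ind, h1.U_ne_S i j' i j j.isLt.le, hYS _ j.isLt.le,
        S_eq_S_iff h1 j'.isLt.le j.isLt.le, Fin.val_inj, hj']) (by simp)]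
    simp [ind, hPS, hPY, h1.U_ne_S i j i j j.isLt.le, hYS _ j.isLt.le]
  simp [lastProductDeriv_three h1 hYS hj, hgY, hgS, hPY, hPS, hPU]
  ring

theorem lastBlock_eq_of_lastProductDeriv_eq {k₁ k₂ : N.Param → ℝ} (hc : k₂ ⟨i, j, 2⟩ ≠ 0)
    (hD : ∀ n, 1 ≤ n → n ≤ 2 → N.lastProductDeriv k₁ i n = N.lastProductDeriv k₂ i n) :
    k₁ ⟨i, j, 0⟩ = k₂ ⟨i, j, 0⟩ ∧ k₁ ⟨i, j, 1⟩ = k₂ ⟨i, j, 1⟩ ∧ k₁ ⟨i, j, 2⟩ = k₂ ⟨i, j, 2⟩ := by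
  have hc' := congrArg (eval (({N.U i (j + 1)} : Set σ).indicator 1)) (hD 1 le_rfl one_le_two)
  have hK := congrArg (eval (({N.U i (j + 1)} : Set σ).indicator 1)) (hD 2 one_le_two le_rfl)
  have ha := congrArg (eval (({N.Y i, N.S i j} : Set σ).indicator 1)) (hD 2 one_le_two le_rfl)
  simp only [eval_lastProductDeriv_one h1 hYS hj] at hc'
  simp only [eval_lastProductDeriv_two_U h1 hYS hj, hc', neg_inj] at hK
  simp only [eval_lastProductDeriv_two_YS h1 hYS hj, hc'] at ha
  have hK' := mul_left_cancel₀ hc hK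
  exact ⟨mul_left_cancel₀ hc ha, by linarith, hc'⟩

theorem block_eq_of_lastProductDeriv_eq {k₁ k₂ : N.Param → ℝ} {q : Fin (N.L i)} (hq : q ≠ j)
    (hc : k₂ ⟨i, j, 2⟩ ≠ 0) (ha : k₂ ⟨i, j, 0⟩ ≠ 0)
    (hD : ∀ n, 1 ≤ n → n ≤ 3 → N.lastProductDeriv k₁ i n = N.lastProductDeriv k₂ i n) :
    k₁ ⟨i, q, 0⟩ = k₂ ⟨i, q, 0⟩ ∧
      k₁ ⟨i, q, 1⟩ + k₁ ⟨i, q, 2⟩ = k₂ ⟨i, q, 1⟩ + k₂ ⟨i, q, 2⟩ := by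
  obtain ⟨ha', hb', hc'⟩ := lastBlock_eq_of_lastProductDeriv_eq h1 hYS hj hc
    fun n h1n hn => hD n h1n (hn.trans (by norm_num))
  have hca : k₂ ⟨i, j, 2⟩ * k₂ ⟨i, j, 0⟩ ≠ 0 := mul_ne_zero hc ha
  have hK := congrArg (eval (({N.U i (q + 1), N.S i j} : Set σ).indicator 1))
    (hD 3 (by norm_num) le_rfl)
  have haq := congrArg (eval (({N.Y i, N.S i q, N.S i j} : Set σ).indicator 1))
    (hD 3 (by norm_num) le_rfl)
  simp only [eval_lastProductDeriv_three_US h1 hYS hj _ hq, ha', hc'] at hK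
  simp only [eval_lastProductDeriv_three_YSS h1 hYS hj _ hq, ha', hb', hc', neg_inj] at haq
  have haq' := mul_left_cancel₀ hca haq
  exact ⟨by linarith, mul_left_cancel₀ hca hK⟩

end

variable [Fintype σ] [DecidableEq σ]

/-- Blocks are `0`-indexed: the paper's block `j` is `j-1`. -/
theorem last_block_and_aK_identifiable
    (N : A1Network σ) (h1 : N.Assumption1) (h2 : N.Assumption2) (i₀ : N.ι) :
    N.IdentifiableFrom
      (fun k =>
        (k ⟨i₀, ⟨N.L i₀ - 1, by have := N.Lpos i₀; omega⟩, 0⟩,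
         k ⟨i₀, ⟨N.L i₀ - 1, by have := N.Lpos i₀; omega⟩, 1⟩,
         k ⟨i₀, ⟨N.L i₀ - 1, by have := N.Lpos i₀; omega⟩, 2⟩))
      {N.S i₀ (N.L i₀)} 2
    ∧ (1 < N.L i₀ →
        N.IdentifiableFrom
          (fun k => fun j : Fin (N.L i₀ - 1) =>
            (k ⟨i₀, ⟨(j : ℕ), by have := j.isLt; omega⟩, 0⟩,
             k ⟨i₀, ⟨(j : ℕ), by have := j.isLt; omega⟩, 1⟩ +
               k ⟨i₀, ⟨(j : ℕ), by have := j.isLt; omega⟩, 2⟩))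
          {N.S i₀ (N.L i₀)} 3) := by
  obtain ⟨part, hp⟩ := h2
  have hYS : ∀ m ≤ N.L i₀, N.Y i₀ ≠ N.S i₀ m := fun m hm => Y_ne_S hp i₀ hm
  have hL := N.Lpos i₀
  let j : Fin (N.L i₀) := ⟨N.L i₀ - 1, by omega⟩
  have hj : (j : ℕ) + 1 = N.L i₀ := by dsimp [j]; omega
  have hD : ∀ {k₁ k₂ : N.Param → ℝ} {D : ℕ},
      (∀ x ∈ ({N.S i₀ (N.L i₀)} : Set σ), ∀ ℓ, 1 ≤ ℓ → ℓ ≤ D →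
        N.deriv k₁ ℓ x = N.deriv k₂ ℓ x) →
      ∀ n, 1 ≤ n → n ≤ D → N.lastProductDeriv k₁ i₀ n = N.lastProductDeriv k₂ i₀ n :=
    fun hder n h1n hn => lastProductDeriv_eq_of_deriv_eq h1 hp (hder _ rfl n h1n hn)
  refine ⟨fun k₁ k₂ _ hk₂ hder => ?_, fun _ k₁ k₂ _ hk₂ hder => funext fun q => ?_⟩
  · obtain ⟨ha, hb, hc⟩ := lastBlock_eq_of_lastProductDeriv_eq h1 hYS hj (hk₂ _).ne' (hD hder)
    exact Prod.ext ha (Prod.ext hb hc)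
  · have hq := q.isLt
    obtain ⟨ha, hK⟩ := block_eq_of_lastProductDeriv_eq h1 hYS hj (q := ⟨q, by omega⟩)
      (Fin.ne_of_val_ne (by dsimp [j]; omega)) (hk₂ _).ne' (hk₂ _).ne' (hD hder)
    exact Prod.ext ha hK

end A1Network
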